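/- arXiv:2306.12912 — 2 statements merged into one kernel-verified Lean document; each statement's English description precedes it below -/
import Mathlib

section
/- For two probability measures p₀ and p₁ on the real line with cumulative distribution functions F₀ and F₁, the k-Wasserstein distance satisfies W_k(p₀,p₁)^k = ∫₀¹ |F₀⁻¹(u) − F₁⁻¹(u)|^k du, where F⁻¹ denotes the generalized inverse (quantile function). -/
/-! The quantile coupling, the law of `(F₀⁻¹ U, F₁⁻¹ U)` for `U` uniform on `(0, 1)`, has marginals
`p₀` and `p₁`, and its cost is `∫₀¹ |F₀⁻¹ u - F₁⁻¹ u| ^ k du`. It is optimal: by Tonelli,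
`E (X - Y - t)⁺ = ∫ P(Y + t ≤ s < X) ds`; for every coupling `P(Y + t ≤ s < X) ≥ F₁(s - t) - F₀(s)`,
and the quantile coupling attains this bound. Finally `|u| ^ k` is a mixture over `t ≥ 0` of the
hinges `(u - t)⁺ + (-u - t)⁺`: the Dirac mass at `0` for `k = 1`, and the density
`k (k - 1) t ^ (k - 2)` (the second derivative of `|u| ^ k`) for `k > 1`. -/

open MeasureTheory Set

/-- Cumulative distribution function of a measure on `ℝ`. -/
noncomputable def cdf' (p : Measure ℝ) (x : ℝ) : ℝ := (p (Iic x)).toReal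

/-- Generalized inverse (quantile function) of a cdf. -/
noncomputable def quantile' (p : Measure ℝ) (u : ℝ) : ℝ := sInf {x : ℝ | u ≤ cdf' p x}

open ProbabilityTheory
open scoped ENNReal

instance isProbabilityMeasure_volume_restrict_Ioo :
    IsProbabilityMeasure (volume.restrict (Ioo (0:ℝ) 1)) :=
  ⟨by simp⟩

section Quantile

variable {p : Measure ℝ} [IsProbabilityMeasure p]

lemma cdf'_eq_cdf : cdf' p = cdf p := by
  ext x
  rw [cdf', cdf_eq_real, measureReal_def]

lemma quantile'_le_iff {u x : ℝ} (hu : u ∈ Ioo 0 1) : quantile' p u ≤ x ↔ u ≤ cdf' p x := by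
  rw [quantile', cdf'_eq_cdf]
  set S := {x : ℝ | u ≤ cdf p x}
  have hbdd : BddBelow S := by
    obtain ⟨y, hy⟩ := ((tendsto_cdf_atBot p).eventually_lt_const hu.1).exists
    exact ⟨y, fun x hx => le_of_not_gt fun hxy => (hy.trans_le hx).not_ge (monotone_cdf p hxy.le)⟩
  have hne : S.Nonempty :=
    ((tendsto_cdf_atTop p).eventually_const_lt hu.2).exists.imp fun _ => le_of_lt
  -- `cdf p` is right-continuous and every point to the right of `sInf S` lies in `S`
  have hmem : sInf S ∈ S := by
    refine ge_of_tendsto (((cdf p).right_continuous _).mono Ioi_subset_Ici_self) ?_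
    filter_upwards [self_mem_nhdsWithin] with y hy
    obtain ⟨z, hzS, hzy⟩ := exists_lt_of_csInf_lt hne hy
    exact hzS.trans (monotone_cdf p hzy.le)
  exact ⟨fun h => hmem.trans (monotone_cdf p h), fun h => csInf_le hbdd h⟩

lemma monotoneOn_quantile' : MonotoneOn (quantile' p) (Ioo 0 1) := fun _ hu _ hv huv =>
  (quantile'_le_iff hu).2 (huv.trans ((quantile'_le_iff hv).1 le_rfl))

lemma aemeasurable_quantile' : AEMeasurable (quantile' p) (volume.restrict (Ioo 0 1)) :=
  aemeasurable_restrict_of_monotoneOn measurableSet_Ioo monotoneOn_quantile'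

lemma map_quantile'_volume_Ioo : (volume.restrict (Ioo 0 1)).map (quantile' p) = p := by
  have := Measure.isProbabilityMeasure_map (aemeasurable_quantile' (p := p))
  refine Measure.ext_of_Iic _ _ fun x => ?_
  have hpre : quantile' p ⁻¹' Iic x ∩ Ioo 0 1 = Iic (cdf' p x) ∩ Ioo 0 1 := by
    ext u
    simp only [mem_inter_iff, mem_preimage, mem_Iic]
    exact and_congr_left quantile'_le_iff
  rw [Measure.map_apply_of_aemeasurable aemeasurable_quantile' measurableSet_Iic,
    Measure.restrict_apply' measurableSet_Ioo, hpre, ← Measure.restrict_apply measurableSet_Iic,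
    Measure.restrict_congr_set Ioo_ae_eq_Ioc, Measure.restrict_apply measurableSet_Iic, inter_comm,
    Ioc_inter_Iic, min_eq_right (cdf'_eq_cdf (p := p) ▸ cdf_le_one p x), Real.volume_Ioc, sub_zero,
    cdf', ENNReal.ofReal_toReal (measure_ne_top p _)]

end Quantile

lemma ofReal_sub_add_ofReal_neg_sub (u : ℝ) {t : ℝ} (ht : 0 ≤ t) :
    ENNReal.ofReal (u - t) + ENNReal.ofReal (-u - t) = ENNReal.ofReal (|u| - t) := by
  rcases le_total 0 u with h | h
  · rw [abs_of_nonneg h, ENNReal.ofReal_of_nonpos (by linarith : -u - t ≤ 0), add_zero]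
  · rw [abs_of_nonpos h, ENNReal.ofReal_of_nonpos (by linarith : u - t ≤ 0), zero_add]

lemma integral_rpow_mul_sub {k : ℝ} (hk : 1 < k) {a : ℝ} (ha : 0 ≤ a) :
    ∫ t in 0..a, k * (k - 1) * t ^ (k - 2) * (a - t) = a ^ k := by
  have hsplit : ∀ t ∈ uIcc 0 a, k * (k - 1) * t ^ (k - 2) * (a - t)
      = k * (k - 1) * a * t ^ (k - 2) - k * (k - 1) * t ^ (k - 2 + 1) := by
    intro t ht
    rw [Real.rpow_add_one' (uIcc_of_le ha ▸ ht).1 (by linarith)]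
    ring
  have hint : ∀ r : ℝ, 0 < r + 1 → IntervalIntegrable (fun t : ℝ => t ^ r) volume 0 a :=
    fun r hr => intervalIntegral.intervalIntegrable_rpow' (by linarith)
  rw [intervalIntegral.integral_congr hsplit, intervalIntegral.integral_sub
    ((hint _ (by linarith)).const_mul _) ((hint _ (by linarith)).const_mul _),
    intervalIntegral.integral_const_mul, intervalIntegral.integral_const_mul,
    integral_rpow (by left; linarith), integral_rpow (by left; linarith),
    show k - 2 + 1 = k - 1 by ring, Real.zero_rpow (by linarith), Real.zero_rpow (by linarith),
    sub_add_cancel, sub_zero, sub_zero]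
  have hak : a * a ^ (k - 1) = a ^ k := by
    rw [mul_comm, ← Real.rpow_add_one' ha (by linarith), sub_add_cancel]
  have hk₀ : k ≠ 0 := by linarith
  have hk₁ : k - 1 ≠ 0 := by linarith
  field_simp
  linear_combination k * hak

lemma lintegral_ofReal_rpow_mul_ofReal_sub {k : ℝ} (hk : 1 < k) {a : ℝ} (ha : 0 ≤ a) :
    ∫⁻ t in Ioi 0, ENNReal.ofReal (k * (k - 1) * t ^ (k - 2)) * ENNReal.ofReal (a - t)
      = ENNReal.ofReal (a ^ k) := by
  have hw : ∀ t ∈ Ioi (0 : ℝ), 0 ≤ k * (k - 1) * t ^ (k - 2) := fun t ht =>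
    mul_nonneg (by nlinarith) (Real.rpow_nonneg (le_of_lt ht) _)
  have hint : IntegrableOn (fun t => k * (k - 1) * t ^ (k - 2) * (a - t)) (Ioc 0 a) :=
    (intervalIntegrable_iff_integrableOn_Ioc_of_le ha).1
      (((intervalIntegral.intervalIntegrable_rpow' (by linarith)).const_mul _).mul_continuousOn
        (by fun_prop))
  rw [setLIntegral_congr_fun measurableSet_Ioi fun t ht => (ENNReal.ofReal_mul (hw t ht)).symm,
    ← Ioc_union_Ioi_eq_Ioi ha, lintegral_union measurableSet_Ioi Ioc_disjoint_Ioi_same,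
    setLIntegral_congr_fun measurableSet_Ioi fun t ht => ENNReal.ofReal_of_nonpos
      (mul_nonpos_of_nonneg_of_nonpos (hw t (ha.trans_lt ht)) (by linarith [mem_Ioi.1 ht])),
    lintegral_zero, add_zero, ← ofReal_integral_eq_lintegral_ofReal hint
      ((ae_restrict_iff' measurableSet_Ioc).2 (.of_forall fun t ht =>
        mul_nonneg (hw t ht.1) (by linarith [ht.2]))),
    ← intervalIntegral.integral_of_le ha, integral_rpow_mul_sub hk ha]

lemma exists_ofReal_abs_rpow_eq_lintegral {k : ℝ} (hk : 1 ≤ k) :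
    ∃ ν : Measure ℝ, SFinite ν ∧ ∀ u : ℝ,
      ENNReal.ofReal (|u| ^ k) = ∫⁻ t, ENNReal.ofReal (u - t) + ENNReal.ofReal (-u - t) ∂ν := by
  rcases hk.eq_or_lt with rfl | hk
  · refine ⟨Measure.dirac 0, inferInstance, fun u => ?_⟩
    rw [lintegral_dirac, ofReal_sub_add_ofReal_neg_sub u le_rfl, Real.rpow_one, sub_zero]
  · refine ⟨(volume.restrict (Ioi 0)).withDensity fun t =>
      ENNReal.ofReal (k * (k - 1) * t ^ (k - 2)), inferInstance, fun u => ?_⟩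
    rw [lintegral_withDensity_eq_lintegral_mul _ (by fun_prop) (by fun_prop),
      ← lintegral_ofReal_rpow_mul_ofReal_sub hk (abs_nonneg u)]
    refine setLIntegral_congr_fun measurableSet_Ioi fun t ht => ?_
    rw [Pi.mul_apply, ofReal_sub_add_ofReal_neg_sub u (le_of_lt ht)]

lemma measurableSet_slab (s t : ℝ) : MeasurableSet {xy : ℝ × ℝ | xy.2 + t ≤ s ∧ s < xy.1} := by
  measurability

lemma ofReal_cdf'_sub_le_slab {p₀ p₁ : Measure ℝ} {π : Measure (ℝ × ℝ)} [IsFiniteMeasure π]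
    (hπ₀ : π.map Prod.fst = p₀) (hπ₁ : π.map Prod.snd = p₁) (s t : ℝ) :
    ENNReal.ofReal (cdf' p₁ (s - t) - cdf' p₀ s) ≤ π {xy | xy.2 + t ≤ s ∧ s < xy.1} := by
  have hcdf₀ : cdf' p₀ s = π.real {xy | xy.1 ≤ s} := by
    rw [cdf', ← hπ₀, Measure.map_apply measurable_fst measurableSet_Iic]; rfl
  have hcdf₁ : cdf' p₁ (s - t) = π.real {xy | xy.2 ≤ s - t} := by
    rw [cdf', ← hπ₁, Measure.map_apply measurable_snd measurableSet_Iic]; rfl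
  have hsub : {xy : ℝ × ℝ | xy.2 ≤ s - t} ⊆ {xy | xy.1 ≤ s} ∪ {xy | xy.2 + t ≤ s ∧ s < xy.1} :=
    fun xy hxy => (le_or_gt xy.1 s).imp id fun h => ⟨le_sub_iff_add_le.1 hxy, h⟩
  refine ENNReal.ofReal_le_of_le_toReal ?_
  rw [← measureReal_def, hcdf₀, hcdf₁, sub_le_iff_le_add']
  exact (measureReal_mono hsub).trans (measureReal_union_le _ _)

lemma lintegral_ofReal_sub_sub_eq (π : Measure (ℝ × ℝ)) [SFinite π] (t : ℝ) :
    ∫⁻ xy, ENNReal.ofReal (xy.1 - xy.2 - t) ∂π = ∫⁻ s, π {xy | xy.2 + t ≤ s ∧ s < xy.1} := by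
  have hS : MeasurableSet {q : (ℝ × ℝ) × ℝ | q.1.2 + t ≤ q.2 ∧ q.2 < q.1.1} := by measurability
  have hfiber : ∀ xy : ℝ × ℝ, ENNReal.ofReal (xy.1 - xy.2 - t) = volume (Ico (xy.2 + t) xy.1) := by
    intro xy
    rw [Real.volume_Ico, sub_sub]
  simp_rw [hfiber]
  exact (Measure.prod_apply hS).symm.trans (Measure.prod_apply_symm hS)

lemma integrable_abs_sub_rpow_of_map {π : Measure (ℝ × ℝ)} {k : ℝ} (hk : 0 < k)
    (h₀ : Integrable (fun x => |x| ^ k) (π.map Prod.fst))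
    (h₁ : Integrable (fun x => |x| ^ k) (π.map Prod.snd)) :
    Integrable (fun xy => |xy.1 - xy.2| ^ k) π := by
  have hmemLp : ∀ {f : ℝ × ℝ → ℝ}, Measurable f → Integrable (fun x => |x| ^ k) (π.map f) →
      MemLp f (ENNReal.ofReal k) π := fun hf h => by
    refine MemLp.comp_of_map (g := id) ?_ hf.aemeasurable
    rw [← integrable_norm_rpow_iff aestronglyMeasurable_id (by simpa using hk)
      ENNReal.ofReal_ne_top]
    simpa [ENNReal.toReal_ofReal hk.le] using h
  simpa [ENNReal.toReal_ofReal hk.le] using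
    ((hmemLp measurable_fst h₀).sub (hmemLp measurable_snd h₁)).integrable_norm_rpow
      (by simpa using hk) ENNReal.ofReal_ne_top

noncomputable def quantileCoupling (p₀ p₁ : Measure ℝ) : Measure (ℝ × ℝ) :=
  (volume.restrict (Ioo 0 1)).map fun u => (quantile' p₀ u, quantile' p₁ u)

section Coupling

variable {p₀ p₁ : Measure ℝ} [IsProbabilityMeasure p₀] [IsProbabilityMeasure p₁]

lemma aemeasurable_quantile'_prodMk :
    AEMeasurable (fun u => (quantile' p₀ u, quantile' p₁ u)) (volume.restrict (Ioo 0 1)) :=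
  aemeasurable_quantile'.prodMk aemeasurable_quantile'

instance isProbabilityMeasure_quantileCoupling : IsProbabilityMeasure (quantileCoupling p₀ p₁) :=
  Measure.isProbabilityMeasure_map aemeasurable_quantile'_prodMk

lemma quantileCoupling_map_fst : (quantileCoupling p₀ p₁).map Prod.fst = p₀ := by
  rw [quantileCoupling, AEMeasurable.map_map_of_aemeasurable measurable_fst.aemeasurable
    aemeasurable_quantile'_prodMk]
  exact map_quantile'_volume_Ioo

lemma quantileCoupling_map_snd : (quantileCoupling p₀ p₁).map Prod.snd = p₁ := by
  rw [quantileCoupling, AEMeasurable.map_map_of_aemeasurable measurable_snd.aemeasurable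
    aemeasurable_quantile'_prodMk]
  exact map_quantile'_volume_Ioo

lemma quantileCoupling_map_swap : (quantileCoupling p₀ p₁).map Prod.swap = quantileCoupling p₁ p₀ :=
  AEMeasurable.map_map_of_aemeasurable measurable_swap.aemeasurable aemeasurable_quantile'_prodMk

lemma quantileCoupling_slab_le (s t : ℝ) :
    quantileCoupling p₀ p₁ {xy | xy.2 + t ≤ s ∧ s < xy.1}
      ≤ ENNReal.ofReal (cdf' p₁ (s - t) - cdf' p₀ s) := by
  rw [quantileCoupling, Measure.map_apply_of_aemeasurable aemeasurable_quantile'_prodMk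
    (measurableSet_slab s t), Measure.restrict_apply' measurableSet_Ioo, ← Real.volume_Ioc]
  refine measure_mono fun u ⟨⟨h₁, h₀⟩, hu⟩ => ⟨?_, ?_⟩
  · exact lt_of_not_ge fun h => h₀.not_ge ((quantile'_le_iff hu).2 h)
  · exact (quantile'_le_iff hu).1 (le_sub_iff_add_le.2 h₁)

section Comparison

variable {π : Measure (ℝ × ℝ)} [IsFiniteMeasure π]
  (hπ₀ : π.map Prod.fst = p₀) (hπ₁ : π.map Prod.snd = p₁)
include hπ₀ hπ₁

lemma lintegral_ofReal_sub_sub_quantileCoupling_le (t : ℝ) :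
    ∫⁻ xy, ENNReal.ofReal (xy.1 - xy.2 - t) ∂quantileCoupling p₀ p₁
      ≤ ∫⁻ xy, ENNReal.ofReal (xy.1 - xy.2 - t) ∂π := by
  rw [lintegral_ofReal_sub_sub_eq, lintegral_ofReal_sub_sub_eq]
  exact lintegral_mono fun s =>
    (quantileCoupling_slab_le s t).trans (ofReal_cdf'_sub_le_slab hπ₀ hπ₁ s t)

lemma lintegral_ofReal_neg_sub_sub_quantileCoupling_le (t : ℝ) :
    ∫⁻ xy, ENNReal.ofReal (-(xy.1 - xy.2) - t) ∂quantileCoupling p₀ p₁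
      ≤ ∫⁻ xy, ENNReal.ofReal (-(xy.1 - xy.2) - t) ∂π := by
  have h := lintegral_ofReal_sub_sub_quantileCoupling_le (p₀ := p₁) (p₁ := p₀)
    (π := π.map Prod.swap)
    (by rwa [Measure.map_map measurable_fst measurable_swap])
    (by rwa [Measure.map_map measurable_snd measurable_swap]) t
  rw [← quantileCoupling_map_swap, lintegral_map (by fun_prop) measurable_swap,
    lintegral_map (by fun_prop) measurable_swap] at h
  simpa only [Prod.fst_swap, Prod.snd_swap, neg_sub] using h

lemma lintegral_comp_sub_quantileCoupling_le (ν : Measure ℝ) [SFinite ν] {φ : ℝ → ℝ≥0∞}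
    (hφ : ∀ u, φ u = ∫⁻ t, ENNReal.ofReal (u - t) + ENNReal.ofReal (-u - t) ∂ν) :
    ∫⁻ xy, φ (xy.1 - xy.2) ∂quantileCoupling p₀ p₁ ≤ ∫⁻ xy, φ (xy.1 - xy.2) ∂π := by
  simp_rw [hφ]
  rw [lintegral_lintegral_swap (μ := quantileCoupling p₀ p₁) (by fun_prop),
    lintegral_lintegral_swap (μ := π) (by fun_prop)]
  refine lintegral_mono fun t => ?_
  rw [lintegral_add_left (by fun_prop), lintegral_add_left (by fun_prop)]
  exact add_le_add (lintegral_ofReal_sub_sub_quantileCoupling_le hπ₀ hπ₁ t)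
    (lintegral_ofReal_neg_sub_sub_quantileCoupling_le hπ₀ hπ₁ t)

end Comparison

lemma integral_abs_sub_rpow_quantileCoupling_le {π : Measure (ℝ × ℝ)} [IsFiniteMeasure π]
    (hπ₀ : π.map Prod.fst = p₀) (hπ₁ : π.map Prod.snd = p₁) {k : ℝ} (hk : 1 ≤ k)
    (h₀ : Integrable (fun x => |x| ^ k) p₀) (h₁ : Integrable (fun x => |x| ^ k) p₁) :
    ∫ xy, |xy.1 - xy.2| ^ k ∂quantileCoupling p₀ p₁ ≤ ∫ xy, |xy.1 - xy.2| ^ k ∂π := by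
  have hint := integrable_abs_sub_rpow_of_map (by linarith) (hπ₀ ▸ h₀) (hπ₁ ▸ h₁)
  obtain ⟨ν, _, hν⟩ := exists_ofReal_abs_rpow_eq_lintegral hk
  have hcost : Measurable fun xy : ℝ × ℝ => |xy.1 - xy.2| ^ k := by fun_prop
  rw [integral_eq_lintegral_of_nonneg_ae (.of_forall fun _ => by positivity)
      hcost.aestronglyMeasurable,
    integral_eq_lintegral_of_nonneg_ae (.of_forall fun _ => by positivity)
      hcost.aestronglyMeasurable]
  exact ENNReal.toReal_mono hint.lintegral_lt_top.ne
    (lintegral_comp_sub_quantileCoupling_le hπ₀ hπ₁ ν hν)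

end Coupling

/-- The `k`-Wasserstein distance on `ℝ` (to the power `k`) is the `L^k` distance
between quantile functions. -/
theorem wasserstein_eq_integral_quantile
    (p₀ p₁ : Measure ℝ) [IsProbabilityMeasure p₀] [IsProbabilityMeasure p₁]
    (k : ℝ) (hk : 1 ≤ k)
    (h₀ : Integrable (fun x => |x| ^ k) p₀) (h₁ : Integrable (fun x => |x| ^ k) p₁) :
    sInf {c : ℝ | ∃ π : Measure (ℝ × ℝ), IsProbabilityMeasure π ∧
        π.map Prod.fst = p₀ ∧ π.map Prod.snd = p₁ ∧
        c = ∫ xy, |xy.1 - xy.2| ^ k ∂π} =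
      ∫ u in Ioo (0:ℝ) 1, |quantile' p₀ u - quantile' p₁ u| ^ k := by
  have hquantile : ∫ u in Ioo (0:ℝ) 1, |quantile' p₀ u - quantile' p₁ u| ^ k
      = ∫ xy, |xy.1 - xy.2| ^ k ∂quantileCoupling p₀ p₁ :=
    (integral_map (f := fun xy : ℝ × ℝ => |xy.1 - xy.2| ^ k) aemeasurable_quantile'_prodMk
      (Measurable.aestronglyMeasurable (by fun_prop))).symm
  rw [hquantile]
  refine IsLeast.csInf_eq ⟨⟨quantileCoupling p₀ p₁, inferInstance, quantileCoupling_map_fst,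
    quantileCoupling_map_snd, rfl⟩, ?_⟩
  rintro c ⟨π, _, hπ₀, hπ₁, rfl⟩
  exact integral_abs_sub_rpow_quantileCoupling_le hπ₀ hπ₁ hk h₀ h₁
end

section
/- The fair barycenter score m* defined by group-wise convex combinations of the original score and its transported counterpart satisfies the strong demographic parity property: the conditional distribution of m*(X,S) given S = A equals the conditional distribution given S = B. -/
open MeasureTheory ProbabilityTheory Set

/-!
When both cdfs are continuous and strictly increasing, `T = F_B⁻¹ ∘ F_A` is an increasing
bijection of `ℝ` pushing the law of group `A` forward to that of group `B`, with inverse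
`F_A⁻¹ ∘ F_B`. Writing the score of group `A` as `x ↦ ω_A x + ω_B T x` and substituting
`x = T⁻¹ y` with `y` distributed as group `B` gives exactly the score of group `B`.
-/

section

variable {ν ν' : Measure ℝ}

lemma cdf'_eq_cdf_s12 (ν : Measure ℝ) [IsProbabilityMeasure ν] : cdf' ν = cdf ν := by
  funext x
  rw [cdf_eq_real]
  rfl

lemma quantile'_cdf' (hm : StrictMono (cdf' ν)) (x : ℝ) : quantile' ν (cdf' ν x) = x := by
  have : {y | cdf' ν x ≤ cdf' ν y} = Ici x := by
    ext y
    simp [hm.le_iff_le]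
  rw [quantile', this, csInf_Ici]

lemma cdf'_mem_Ioo [IsProbabilityMeasure ν] (hm : StrictMono (cdf' ν)) (x : ℝ) :
    cdf' ν x ∈ Ioo 0 1 := by
  rw [cdf'_eq_cdf_s12] at hm ⊢
  exact ⟨(cdf_nonneg ν (x - 1)).trans_lt (hm (sub_one_lt x)),
    (hm (lt_add_one x)).trans_le (cdf_le_one ν (x + 1))⟩

lemma Ioo_subset_range_cdf' [IsProbabilityMeasure ν] (hc : Continuous (cdf' ν)) :
    Ioo 0 1 ⊆ range (cdf' ν) := by
  rw [cdf'_eq_cdf_s12] at hc ⊢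
  intro u hu
  exact mem_range_of_exists_le_of_exists_ge hc
    ((tendsto_cdf_atBot ν).eventually (eventually_le_nhds hu.1)).exists
    ((tendsto_cdf_atTop ν).eventually (eventually_ge_nhds hu.2)).exists

lemma cdf'_quantile' [IsProbabilityMeasure ν] (hc : Continuous (cdf' ν))
    (hm : StrictMono (cdf' ν)) {u : ℝ} (hu : u ∈ Ioo 0 1) : cdf' ν (quantile' ν u) = u := by
  obtain ⟨x, rfl⟩ := Ioo_subset_range_cdf' hc hu
  rw [quantile'_cdf' hm]

noncomputable def quantileTransport (ν ν' : Measure ℝ) (x : ℝ) : ℝ := quantile' ν' (cdf' ν x)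

variable [IsProbabilityMeasure ν] [IsProbabilityMeasure ν']

lemma cdf'_quantileTransport (hm : StrictMono (cdf' ν)) (hc' : Continuous (cdf' ν'))
    (hm' : StrictMono (cdf' ν')) (x : ℝ) :
    cdf' ν' (quantileTransport ν ν' x) = cdf' ν x :=
  cdf'_quantile' hc' hm' (cdf'_mem_Ioo hm x)

lemma quantileTransport_quantileTransport (hm : StrictMono (cdf' ν))
    (hc' : Continuous (cdf' ν')) (hm' : StrictMono (cdf' ν')) (x : ℝ) :
    quantileTransport ν' ν (quantileTransport ν ν' x) = x := by
  rw [quantileTransport, cdf'_quantileTransport hm hc' hm', quantile'_cdf' hm]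

lemma gc_quantileTransport (hc : Continuous (cdf' ν)) (hm : StrictMono (cdf' ν))
    (hc' : Continuous (cdf' ν')) (hm' : StrictMono (cdf' ν')) :
    GaloisConnection (quantileTransport ν ν') (quantileTransport ν' ν) := fun y x => by
  rw [← hm'.le_iff_le, cdf'_quantileTransport hm hc' hm', ← cdf'_quantileTransport hm' hc hm x]
  exact hm.le_iff_le

lemma measurable_quantileTransport (hc : Continuous (cdf' ν)) (hm : StrictMono (cdf' ν))
    (hc' : Continuous (cdf' ν')) (hm' : StrictMono (cdf' ν')) :
    Measurable (quantileTransport ν ν') :=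
  (gc_quantileTransport hc hm hc' hm').monotone_l.measurable

lemma map_quantileTransport (hc : Continuous (cdf' ν)) (hm : StrictMono (cdf' ν))
    (hc' : Continuous (cdf' ν')) (hm' : StrictMono (cdf' ν')) :
    ν.map (quantileTransport ν ν') = ν' := by
  refine Measure.ext_of_Iic _ _ fun x => ?_
  have hpre : quantileTransport ν ν' ⁻¹' Iic x = Iic (quantileTransport ν' ν x) :=
    ext fun y => gc_quantileTransport hc hm hc' hm' y x
  rw [Measure.map_apply (measurable_quantileTransport hc hm hc' hm') measurableSet_Iic, hpre]
  exact (ENNReal.toReal_eq_toReal_iff' (measure_ne_top _ _) (measure_ne_top _ _)).mp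
    (cdf'_quantileTransport hm' hc hm x)

lemma map_add_quantileTransport (a b : ℝ) (hc : Continuous (cdf' ν))
    (hm : StrictMono (cdf' ν)) (hc' : Continuous (cdf' ν')) (hm' : StrictMono (cdf' ν')) :
    ν.map (fun x => a * x + b * quantileTransport ν ν' x) =
      ν'.map (fun y => a * quantileTransport ν' ν y + b * y) := by
  have hT := measurable_quantileTransport hc hm hc' hm'
  have hT' := measurable_quantileTransport hc' hm' hc hm
  calc ν.map (fun x => a * x + b * quantileTransport ν ν' x)
      = (ν'.map (quantileTransport ν' ν)).map (fun x => a * x + b * quantileTransport ν ν' x) := by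
        rw [map_quantileTransport hc' hm' hc hm]
    _ = ν'.map (fun y => a * quantileTransport ν' ν y + b * y) := by
        rw [Measure.map_map (by fun_prop) hT']
        congr 1
        funext y
        simp only [Function.comp, quantileTransport_quantileTransport hm' hc hm]

end

theorem fair_barycenter_strong_demographic_parity_general
    {Ω : Type*} [MeasurableSpace Ω] (μ : Measure Ω) [IsProbabilityMeasure μ]
    (S : Ω → Bool)
    (m : Ω → ℝ) (hm : Measurable m)
    (hA : 0 < μ {ω | S ω = true}) (hB : 0 < μ {ω | S ω = false})
    (hFAc : Continuous (cdf' ((μ[|{ω | S ω = true}]).map m)))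
    (hFAm : StrictMono (cdf' ((μ[|{ω | S ω = true}]).map m)))
    (hFBc : Continuous (cdf' ((μ[|{ω | S ω = false}]).map m)))
    (hFBm : StrictMono (cdf' ((μ[|{ω | S ω = false}]).map m))) :
    (μ[|{ω | S ω = true}]).map (fun ω =>
        (μ {ω' | S ω' = true}).toReal * m ω +
        (μ {ω' | S ω' = false}).toReal *
          quantile' ((μ[|{ω | S ω = false}]).map m)
            (cdf' ((μ[|{ω | S ω = true}]).map m) (m ω))) =
      (μ[|{ω | S ω = false}]).map (fun ω =>
        (μ {ω' | S ω' = true}).toReal *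
          quantile' ((μ[|{ω | S ω = true}]).map m)
            (cdf' ((μ[|{ω | S ω = false}]).map m) (m ω)) +
        (μ {ω' | S ω' = false}).toReal * m ω) := by
  have := cond_isProbabilityMeasure hA.ne'
  have := cond_isProbabilityMeasure hB.ne'
  have : IsProbabilityMeasure ((μ[|{ω | S ω = true}]).map m) :=
    Measure.isProbabilityMeasure_map hm.aemeasurable
  have : IsProbabilityMeasure ((μ[|{ω | S ω = false}]).map m) :=
    Measure.isProbabilityMeasure_map hm.aemeasurable
  have hTA := measurable_quantileTransport hFAc hFAm hFBc hFBm
  have hTB := measurable_quantileTransport hFBc hFBm hFAc hFAm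
  calc _ = ((μ[|{ω | S ω = true}]).map m).map (fun x => _ * x + _ * quantileTransport _ _ x) :=
        (Measure.map_map (by fun_prop) hm).symm
    _ = ((μ[|{ω | S ω = false}]).map m).map (fun y => _ * quantileTransport _ _ y + _ * y) :=
        map_add_quantileTransport _ _ hFAc hFAm hFBc hFBm
    _ = _ := Measure.map_map (by fun_prop) hm

/-- The fair barycenter score satisfies strong demographic parity: its conditional
distributions given the two groups coincide. -/
theorem fair_barycenter_strong_demographic_parity
    {Ω : Type*} [MeasurableSpace Ω] (μ : Measure Ω) [IsProbabilityMeasure μ]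
    (S : Ω → Bool) (hS : Measurable S)
    (m : Ω → ℝ) (hm : Measurable m)
    (hA : 0 < μ {ω | S ω = true}) (hB : 0 < μ {ω | S ω = false})
    (hFAc : Continuous (cdf' ((μ[|{ω | S ω = true}]).map m)))
    (hFAm : StrictMono (cdf' ((μ[|{ω | S ω = true}]).map m)))
    (hFBc : Continuous (cdf' ((μ[|{ω | S ω = false}]).map m)))
    (hFBm : StrictMono (cdf' ((μ[|{ω | S ω = false}]).map m))) :
    (μ[|{ω | S ω = true}]).map (fun ω =>
        (μ {ω' | S ω' = true}).toReal * m ω +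
        (μ {ω' | S ω' = false}).toReal *
          quantile' ((μ[|{ω | S ω = false}]).map m)
            (cdf' ((μ[|{ω | S ω = true}]).map m) (m ω))) =
      (μ[|{ω | S ω = false}]).map (fun ω =>
        (μ {ω' | S ω' = true}).toReal *
          quantile' ((μ[|{ω | S ω = true}]).map m)
            (cdf' ((μ[|{ω | S ω = false}]).map m) (m ω)) +
        (μ {ω' | S ω' = false}).toReal * m ω) :=
  fair_barycenter_strong_demographic_parity_general μ S m hm hA hB hFAc hFAm hFBc hFBm
end
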